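/- Let $C = \{(c_0, c_1, \dots, c_k) \in \mathbb{N}^{k+1} : 1 = c_0 < c_1 < \cdots < c_k \le n+1 \}$ with partial order $c \preceq c'$ iff $c_j \le c'_j$ for all $j$. For $b = (b_{ji}) \in B^{k,\infty}$ define $\Delta_b(c) = \sum_{j=1}^k \sum_{c_{j-1} < i < c_j} b_{ji}$. Then there exists a unique $c^{(e)} \in C$ such that for all $c \in C$: $\Delta_b(c^{(e)}) \le \Delta_b(c)$ if $c^{(e)} \preceq c$, and $\Delta_b(c^{(e)}) < \Delta_b(c)$ if $c^{(e)} \not\preceq c$. -/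

import Mathlib

/-- Validity of an index `(j,i)` of the arrays in `B^{k,∞}`. -/
def Bidx (n k j i : ℕ) : Prop := 1 ≤ j ∧ j ≤ k ∧ j ≤ i ∧ i ≤ j + (n + 1 - k)

/-- The crystal `B^{k,∞}`: integer arrays `(b_{ji})`, `1 ≤ j ≤ k`,
`j ≤ i ≤ j + k'` with `k' = n+1-k`, all of whose row sums vanish. -/
def BkInf (n k : ℕ) : Set (ℕ → ℕ → ℤ) :=
  {b | (∀ j i, ¬ Bidx n k j i → b j i = 0) ∧
    ∀ j, 1 ≤ j → j ≤ k → ∑ i ∈ Finset.Icc j (j + (n + 1 - k)), b j i = 0}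

/-- Membership in `C = {(c₀,…,c_k) : 1 = c₀ < c₁ < ⋯ < c_k ≤ n+1}`. -/
def IsC (n k : ℕ) (c : Fin (k + 1) → ℕ) : Prop :=
  c 0 = 1 ∧ StrictMono c ∧ c (Fin.last k) ≤ n + 1

/-- `Δ_b(c) = ∑_{j=1}^k ∑_{c_{j-1} < i < c_j} b_{ji}`. -/
def Delta (k : ℕ) (b : ℕ → ℕ → ℤ) (c : Fin (k + 1) → ℕ) : ℤ :=
  ∑ j : Fin k, ∑ i ∈ Finset.Ioo (c j.castSucc) (c j.succ), b ((j : ℕ) + 1) i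

/-!
`Δ_b` is modular on `C`, which is a finite sublattice of `ℕ^{k+1}` under componentwise `min`
and `max`: each summand of `Δ_b` is a difference of partial row sums evaluated at `c_j` and at
`c_{j-1}`. Hence the minimizers of `Δ_b` are closed under `min`, and the least minimizer
`c⁽ᵉ⁾` has the required property: any `c` with `c⁽ᵉ⁾ ⋠ c` is not a minimizer.
-/

open Finset

section ModularMinimization

variable {α β : Type*} [Lattice α] [AddCommMonoid β] [LinearOrder β]
  [IsOrderedCancelAddMonoid β] {S : Set α} {f : α → β}

theorem IsMinOn.inf_of_modular (hsup : SupClosed S)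
    (hmod : ∀ x ∈ S, ∀ y ∈ S, f (x ⊓ y) + f (x ⊔ y) = f x + f y)
    {x y : α} (hx : x ∈ S) (hy : y ∈ S) (hfx : IsMinOn f S x) (hfy : IsMinOn f S y) :
    IsMinOn f S (x ⊓ y) := by
  refine isMinOn_iff.2 fun c hc => ?_
  by_contra! hlt
  have hx_lt : f x < f (x ⊓ y) := (hfx hc).trans_lt hlt
  have hy_le : f y ≤ f (x ⊔ y) := hfy (hsup hx hy)
  exact (add_lt_add_of_lt_of_le hx_lt hy_le).ne' (hmod x hx y hy)

theorem exists_isLeast_isMinOn_of_modular (hS : S.Finite) (hne : S.Nonempty)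
    (hinf : InfClosed S) (hsup : SupClosed S)
    (hmod : ∀ x ∈ S, ∀ y ∈ S, f (x ⊓ y) + f (x ⊔ y) = f x + f y) :
    ∃ e, IsLeast {x ∈ S | IsMinOn f S x} e := by
  set M := {x ∈ S | IsMinOn f S x}
  have hMfin : M.Finite := hS.subset fun _ hx => hx.1
  have hMne : M.Nonempty := by
    obtain ⟨x, hx, hmin⟩ := Set.exists_min_image S f hS hne
    exact ⟨x, hx, hmin⟩
  have hMinf : InfClosed M := fun x hx y hy =>
    ⟨hinf hx.1 hy.1, hx.2.inf_of_modular hsup hmod hx.1 hy.1 hy.2⟩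
  refine ⟨hMfin.toFinset.inf' (by simpa using hMne) id, ?_, fun x hx => ?_⟩
  · exact hMinf.finsetInf'_mem _ fun x hx => by simpa using hx
  · exact inf'_le id (by simpa using hx)

theorem existsUnique_least_minimizer_of_modular (hS : S.Finite) (hne : S.Nonempty)
    (hinf : InfClosed S) (hsup : SupClosed S)
    (hmod : ∀ x ∈ S, ∀ y ∈ S, f (x ⊓ y) + f (x ⊔ y) = f x + f y) :
    ∃! e, e ∈ S ∧ ∀ c ∈ S, (e ≤ c → f e ≤ f c) ∧ (¬ e ≤ c → f e < f c) := by
  obtain ⟨e, ⟨heS, hemin⟩, hleast⟩ := exists_isLeast_isMinOn_of_modular hS hne hinf hsup hmod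
  have hstrict : ∀ c ∈ S, ¬ e ≤ c → f e < f c := fun c hc hec =>
    (hemin hc).lt_of_ne fun heq => hec (hleast ⟨hc, fun d hd => heq ▸ hemin hd⟩)
  refine ⟨e, ⟨heS, fun c hc => ⟨fun _ => hemin hc, hstrict c hc⟩⟩, ?_⟩
  rintro e' ⟨he'S, he'⟩
  have he'e : e' ≤ e := by
    by_contra h
    exact (he' e heS).2 h |>.not_ge (hemin he'S)
  by_contra hne'
  have hee' : ¬ e ≤ e' := fun h => hne' (le_antisymm he'e h)
  exact (hstrict e' he'S hee').not_ge ((he' e heS).1 he'e)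

end ModularMinimization

theorem map_min_add_map_max {α β : Type*} [LinearOrder α] [AddCommMagma β]
    (g : α → β) (x y : α) : g (min x y) + g (max x y) = g x + g y := by
  rcases le_total x y with h | h
  · rw [min_eq_left h, max_eq_right h]
  · rw [min_eq_right h, max_eq_left h, add_comm]

theorem sum_Ioo_eq_sub {β : Type*} [AddCommGroup β] (g : ℕ → β) {a e : ℕ} (h : a < e) :
    ∑ i ∈ Ioo a e, g i = ∑ i ∈ range e, g i - ∑ i ∈ range (a + 1), g i := by
  rw [← Ico_add_one_left_eq_Ioo]
  exact sum_Ico_eq_sub _ h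

theorem sum_Ioo_min_add_sum_Ioo_max {β : Type*} [AddCommGroup β] (g : ℕ → β)
    {a e a' e' : ℕ} (h : a < e) (h' : a' < e') :
    ∑ i ∈ Ioo (min a a') (min e e'), g i + ∑ i ∈ Ioo (max a a') (max e e'), g i =
      ∑ i ∈ Ioo a e, g i + ∑ i ∈ Ioo a' e', g i := by
  have hupper := map_min_add_map_max (fun x => ∑ i ∈ range x, g i) e e'
  have hlower := map_min_add_map_max (fun x => ∑ i ∈ range (x + 1), g i) a a'
  rw [sum_Ioo_eq_sub g (min_lt_min h h'), sum_Ioo_eq_sub g (max_lt_max h h'),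
    sum_Ioo_eq_sub g h, sum_Ioo_eq_sub g h', sub_add_sub_comm, sub_add_sub_comm, hupper, hlower]

theorem Delta_inf_add_Delta_sup (k : ℕ) (b : ℕ → ℕ → ℤ) {c c' : Fin (k + 1) → ℕ}
    (hc : StrictMono c) (hc' : StrictMono c') :
    Delta k b (c ⊓ c') + Delta k b (c ⊔ c') = Delta k b c + Delta k b c' := by
  simp only [Delta, ← sum_add_distrib]
  exact sum_congr rfl fun j _ =>
    sum_Ioo_min_add_sum_Ioo_max _ (hc j.castSucc_lt_succ) (hc' j.castSucc_lt_succ)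

section IsC

variable {n k : ℕ}

theorem setOf_isC_finite : {c | IsC n k c}.Finite :=
  (Set.finite_Iic (fun _ => n + 1 : Fin (k + 1) → ℕ)).subset fun _ hc j =>
    (hc.2.1.monotone (Fin.le_last j)).trans hc.2.2

theorem isC_succ_val (hkn : k ≤ n) : IsC n k fun j => (j : ℕ) + 1 :=
  ⟨rfl, fun _ _ h => Nat.succ_lt_succ h, by simpa using hkn⟩

theorem infClosed_setOf_isC : InfClosed {c | IsC n k c} := by
  rintro c ⟨hc0, hc, hcl⟩ c' ⟨hc0', hc', -⟩
  refine ⟨by simp [hc0, hc0'], fun i j hij => ?_, inf_le_left.trans hcl⟩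
  exact lt_min ((min_le_left _ _).trans_lt (hc hij)) ((min_le_right _ _).trans_lt (hc' hij))

theorem supClosed_setOf_isC : SupClosed {c | IsC n k c} := by
  rintro c ⟨hc0, hc, hcl⟩ c' ⟨hc0', hc', hcl'⟩
  refine ⟨by simp [hc0, hc0'], fun i j hij => ?_, max_le hcl hcl'⟩
  exact max_lt ((hc hij).trans_le (le_max_left _ _)) ((hc' hij).trans_le (le_max_right _ _))

end IsC

theorem stmt7_general (n k : ℕ) (hkn : k ≤ n)
    (b : ℕ → ℕ → ℤ) :
    ∃! ce : Fin (k + 1) → ℕ, IsC n k ce ∧ ∀ c, IsC n k c →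
      ((∀ j, ce j ≤ c j) → Delta k b ce ≤ Delta k b c) ∧
      (¬ (∀ j, ce j ≤ c j) → Delta k b ce < Delta k b c) :=
  existsUnique_least_minimizer_of_modular setOf_isC_finite
    ⟨fun j => (j : ℕ) + 1, isC_succ_val hkn⟩
    infClosed_setOf_isC supClosed_setOf_isC fun _ hc _ hc' =>
      Delta_inf_add_Delta_sup k b hc.2.1 hc'.2.1

/-- there is a unique `c⁽ᵉ⁾ ∈ C` such that for every `c ∈ C`,
`Δ_b(c⁽ᵉ⁾) ≤ Δ_b(c)` when `c⁽ᵉ⁾ ≼ c`, and `Δ_b(c⁽ᵉ⁾) < Δ_b(c)` when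
`c⁽ᵉ⁾ ⋠ c` (where `≼` is the componentwise order on `C`). -/
theorem stmt7 (n k : ℕ) (hk : 1 ≤ k) (hkn : k ≤ n)
    (b : ℕ → ℕ → ℤ) (hb : b ∈ BkInf n k) :
    ∃! ce : Fin (k + 1) → ℕ, IsC n k ce ∧ ∀ c, IsC n k c →
      ((∀ j, ce j ≤ c j) → Delta k b ce ≤ Delta k b c) ∧
      (¬ (∀ j, ce j ≤ c j) → Delta k b ce < Delta k b c) :=
  stmt7_general n k hkn b
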